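/- arXiv:1710.06504 — 4 statements merged into one kernel-verified Lean document; each statement's English description precedes it below -/
import Mathlib

section
/- If ψ(x,t) satisfies the free Schrödinger equation -ℏ²/(2m) ∂²ψ/∂x² = iℏ ∂ψ/∂t, and we define φ(x',t) = e^{-if(x',t)} ψ(x'-ξ(t), t) with f(x',t) = (m/ℏ)(-ξ'(t)x' + (1/2)∫₀ᵗ ξ'(s)² ds), where ξ is twice continuously differentiable, then φ satisfies the Schrödinger equation with a linear potential: -ℏ²/(2m) ∂²φ/∂x'² - m ξ''(t) x' φ = iℏ ∂φ/∂t. -/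
open Complex MeasureTheory intervalIntegral

lemma aux_line {g : ℝ × ℝ → ℂ} (hg : Differentiable ℝ g)
    {u v : ℝ → ℝ} {u' v' x : ℝ} (hu : HasDerivAt u u' x) (hv : HasDerivAt v v' x) :
    HasDerivAt (fun z => g (u z, v z))
      ((u' : ℂ) * fderiv ℝ g (u x, v x) (1, 0) + (v' : ℂ) * fderiv ℝ g (u x, v x) (0, 1)) x := by
  have h := (hg (u x, v x)).hasFDerivAt.comp_hasDerivAt x (hu.prodMk hv)
  have e : ((u', v') : ℝ × ℝ) = u' • ((1:ℝ), (0:ℝ)) + v' • ((0:ℝ), (1:ℝ)) := by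
    simp [Prod.ext_iff]
  have e2 : fderiv ℝ g (u x, v x) (u', v')
      = (u' : ℂ) * fderiv ℝ g (u x, v x) (1, 0) + (v' : ℂ) * fderiv ℝ g (u x, v x) (0, 1) := by
    rw [e, map_add, _root_.map_smul, _root_.map_smul, Complex.real_smul, Complex.real_smul]
  exact e2 ▸ h

/-- Extended Galilean transformation of a free Schrödinger solution satisfies the
Schrödinger equation with a linear potential `-m ξ'' x'`. -/
theorem stmt_0
    (ψ : ℝ × ℝ → ℂ) (ξ : ℝ → ℝ) (m ℏ : ℝ) (hm : 0 < m) (hℏ : 0 < ℏ)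
    (hψ : ContDiff ℝ (⊤ : ℕ∞) ψ) (hξ : ContDiff ℝ 2 ξ)
    (hSch : ∀ x t : ℝ,
      -((ℏ : ℂ)^2 / (2 * m)) *
          deriv (fun y : ℝ => deriv (fun z : ℝ => ψ (z, t)) y) x
        = Complex.I * ℏ * deriv (fun s : ℝ => ψ (x, s)) t)
    (f : ℝ → ℝ → ℝ)
    (hf : ∀ x' t : ℝ, f x' t =
      (m / ℏ) * (-(deriv ξ t) * x' + (1/2) * ∫ s in (0:ℝ)..t, (deriv ξ s)^2))
    (φ : ℝ × ℝ → ℂ)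
    (hφ : ∀ x' t : ℝ, φ (x', t) = Complex.exp (-(Complex.I * (f x' t))) * ψ (x' - ξ t, t)) :
    ∀ x' t : ℝ,
      -((ℏ : ℂ)^2 / (2 * m)) *
          deriv (fun y : ℝ => deriv (fun z : ℝ => φ (z, t)) y) x'
        - (m : ℂ) * (deriv (deriv ξ) t) * x' * φ (x', t)
        = Complex.I * ℏ * deriv (fun s : ℝ => φ (x', s)) t := by
  intro x' t
  have hℏ0 : (ℏ:ℂ) ≠ 0 := by exact_mod_cast hℏ.ne'
  have hm0 : (m:ℂ) ≠ 0 := by exact_mod_cast hm.ne'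
  -- regularity of ξ
  have hξ1 : ContDiff ℝ 1 (deriv ξ) := by
    have h2 : ContDiff ℝ (1+1 : ℕ) ξ := by exact_mod_cast hξ
    exact (contDiff_succ_iff_deriv.mp h2).2.2
  have hξd : Differentiable ℝ ξ := hξ.differentiable (by norm_num)
  have hξ'd : Differentiable ℝ (deriv ξ) := hξ1.differentiable one_ne_zero
  -- partial derivatives of ψ
  set ψ₁ : ℝ × ℝ → ℂ := fun p => fderiv ℝ ψ p (1,0) with hψ₁def
  set ψ₂ : ℝ × ℝ → ℂ := fun p => fderiv ℝ ψ p (0,1) with hψ₂def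
  set ψ₁₁ : ℝ × ℝ → ℂ := fun p => fderiv ℝ ψ₁ p (1,0) with hψ₁₁def
  have hψ₁s : ContDiff ℝ (⊤ : ℕ∞) ψ₁ := (hψ.fderiv_right (by simp)).clm_apply contDiff_const
  have hψd : Differentiable ℝ ψ := hψ.differentiable (by simp)
  have hψ₁d : Differentiable ℝ ψ₁ := hψ₁s.differentiable (by simp)
  -- rewrite hSch in terms of ψ₁₁ and ψ₂
  have hx1 : ∀ (s : ℝ), deriv (fun z : ℝ => ψ (z, s)) = fun y => ψ₁ (y, s) := by
    intro s; funext y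
    have := aux_line hψd (hasDerivAt_id y) (hasDerivAt_const y s)
    simpa using this.deriv
  have key : ∀ x t : ℝ, -((ℏ : ℂ)^2 / (2 * m)) * ψ₁₁ (x, t) = Complex.I * ℏ * ψ₂ (x, t) := by
    intro x t
    have h := hSch x t
    rw [hx1 t] at h
    have h1 : deriv (fun y : ℝ => ψ₁ (y, t)) x = ψ₁₁ (x, t) := by
      have := aux_line hψ₁d (hasDerivAt_id x) (hasDerivAt_const x t)
      simpa using this.deriv
    have h2 : deriv (fun s : ℝ => ψ (x, s)) t = ψ₂ (x, t) := by
      have := aux_line hψd (hasDerivAt_const t x) (hasDerivAt_id t)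
      simpa using this.deriv
    rw [h1, h2] at h
    exact h
  -- derivative of f in x'
  have hfx : ∀ z : ℝ, HasDerivAt (fun y : ℝ => f y t) (m / ℏ * -(deriv ξ t)) z := by
    intro z
    have hfe : (fun y : ℝ => f y t)
        = fun y : ℝ => (m / ℏ) * (-(deriv ξ t) * y + (1/2) * ∫ s in (0:ℝ)..t, (deriv ξ s)^2) :=
      funext fun y => hf y t
    rw [hfe]
    have := (((hasDerivAt_id z).const_mul (-(deriv ξ t))).add_const
      ((1/2) * ∫ s in (0:ℝ)..t, (deriv ξ s)^2)).const_mul (m / ℏ)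
    simpa using this
  -- derivative of f in t
  have hInt : HasDerivAt (fun u : ℝ => ∫ s in (0:ℝ)..u, (deriv ξ s)^2) ((deriv ξ t)^2) t := by
    have hc : Continuous fun s => (deriv ξ s)^2 := (hξ1.continuous).pow 2
    exact intervalIntegral.integral_hasDerivAt_right (hc.intervalIntegrable _ _)
      (hc.stronglyMeasurableAtFilter _ _) hc.continuousAt
  have hft : HasDerivAt (fun s : ℝ => f x' s)
      (m / ℏ * (-(deriv (deriv ξ) t) * x' + (1/2) * (deriv ξ t)^2)) t := by
    have hfe : (fun s : ℝ => f x' s)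
        = fun s : ℝ => (m / ℏ) * (-(deriv ξ s) * x' + (1/2) * ∫ u in (0:ℝ)..s, (deriv ξ u)^2) :=
      funext fun s => hf x' s
    rw [hfe]
    exact ((((hξ'd t).hasDerivAt.neg.mul_const x').add (hInt.const_mul (1/2))).const_mul (m / ℏ))
  -- exponential factor, spatial derivative
  have hEx : ∀ z : ℝ, HasDerivAt (fun y : ℝ => Complex.exp (-(Complex.I * (f y t))))
      (Complex.exp (-(Complex.I * (f z t))) * (-(Complex.I * ((m / ℏ * -(deriv ξ t) : ℝ) : ℂ)))) z := by
    intro z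
    exact (((hfx z).ofReal_comp.const_mul Complex.I).neg).cexp
  -- ψ factor, spatial derivative
  have hΨx : ∀ z : ℝ, HasDerivAt (fun y : ℝ => ψ (y - ξ t, t)) (ψ₁ (z - ξ t, t)) z := by
    intro z
    have := aux_line hψd ((hasDerivAt_id z).sub_const (ξ t)) (hasDerivAt_const z t)
    simpa using this
  have hΨ1x : ∀ z : ℝ, HasDerivAt (fun y : ℝ => ψ₁ (y - ξ t, t)) (ψ₁₁ (z - ξ t, t)) z := by
    intro z
    have := aux_line hψ₁d ((hasDerivAt_id z).sub_const (ξ t)) (hasDerivAt_const z t)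
    simpa using this
  -- first spatial derivative of φ
  have hφfun : (fun z : ℝ => φ (z, t))
      = fun z : ℝ => Complex.exp (-(Complex.I * (f z t))) * ψ (z - ξ t, t) :=
    funext fun z => hφ z t
  have hDφ : ∀ z : ℝ, HasDerivAt (fun y : ℝ => φ (y, t))
      (Complex.exp (-(Complex.I * (f z t))) * (-(Complex.I * ((m / ℏ * -(deriv ξ t) : ℝ) : ℂ))) * ψ (z - ξ t, t)
        + Complex.exp (-(Complex.I * (f z t))) * ψ₁ (z - ξ t, t)) z := by
    intro z
    rw [hφfun]
    exact (hEx z).mul (hΨx z)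
  have hd1 : deriv (fun z : ℝ => φ (z, t)) = fun z =>
      Complex.exp (-(Complex.I * (f z t))) * (-(Complex.I * ((m / ℏ * -(deriv ξ t) : ℝ) : ℂ))) * ψ (z - ξ t, t)
        + Complex.exp (-(Complex.I * (f z t))) * ψ₁ (z - ξ t, t) :=
    funext fun z => (hDφ z).deriv
  -- second spatial derivative of φ
  have hD2 : HasDerivAt (fun z : ℝ =>
      Complex.exp (-(Complex.I * (f z t))) * (-(Complex.I * ((m / ℏ * -(deriv ξ t) : ℝ) : ℂ))) * ψ (z - ξ t, t)
        + Complex.exp (-(Complex.I * (f z t))) * ψ₁ (z - ξ t, t))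
      (Complex.exp (-(Complex.I * (f x' t))) * (-(Complex.I * ((m / ℏ * -(deriv ξ t) : ℝ) : ℂ)))
          * (-(Complex.I * ((m / ℏ * -(deriv ξ t) : ℝ) : ℂ))) * ψ (x' - ξ t, t)
        + Complex.exp (-(Complex.I * (f x' t))) * (-(Complex.I * ((m / ℏ * -(deriv ξ t) : ℝ) : ℂ))) * ψ₁ (x' - ξ t, t)
        + (Complex.exp (-(Complex.I * (f x' t))) * (-(Complex.I * ((m / ℏ * -(deriv ξ t) : ℝ) : ℂ))) * ψ₁ (x' - ξ t, t)
          + Complex.exp (-(Complex.I * (f x' t))) * ψ₁₁ (x' - ξ t, t))) x' := by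
    exact (((hEx x').mul_const _).mul (hΨx x')).add ((hEx x').mul (hΨ1x x'))
  -- time derivative of φ
  have hφtfun : (fun s : ℝ => φ (x', s))
      = fun s : ℝ => Complex.exp (-(Complex.I * (f x' s))) * ψ (x' - ξ s, s) :=
    funext fun s => hφ x' s
  have hΨt : HasDerivAt (fun s : ℝ => ψ (x' - ξ s, s))
      (((-(deriv ξ t) : ℝ) : ℂ) * ψ₁ (x' - ξ t, t) + ψ₂ (x' - ξ t, t)) t := by
    have := aux_line hψd ((hξd t).hasDerivAt.const_sub x') (hasDerivAt_id t)
    simpa using this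
  have hEt : HasDerivAt (fun s : ℝ => Complex.exp (-(Complex.I * (f x' s))))
      (Complex.exp (-(Complex.I * (f x' t))) *
        (-(Complex.I * ((m / ℏ * (-(deriv (deriv ξ) t) * x' + (1/2) * (deriv ξ t)^2) : ℝ) : ℂ)))) t :=
    ((hft.ofReal_comp.const_mul Complex.I).neg).cexp
  have hDt : HasDerivAt (fun s : ℝ => φ (x', s))
      (Complex.exp (-(Complex.I * (f x' t))) *
          (-(Complex.I * ((m / ℏ * (-(deriv (deriv ξ) t) * x' + (1/2) * (deriv ξ t)^2) : ℝ) : ℂ)))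
          * ψ (x' - ξ t, t)
        + Complex.exp (-(Complex.I * (f x' t))) *
          (((-(deriv ξ t) : ℝ) : ℂ) * ψ₁ (x' - ξ t, t) + ψ₂ (x' - ξ t, t))) t := by
    rw [hφtfun]
    exact hEt.mul hΨt
  -- solve for ψ₁₁ from the free Schrödinger equation
  have hP11 : ψ₁₁ (x' - ξ t, t)
      = -(2 * (m:ℂ) / ℏ^2) * (Complex.I * ℏ * ψ₂ (x' - ξ t, t)) := by
    rw [← key (x' - ξ t) t]
    field_simp
  -- assemble
  rw [hφ x' t, hDt.deriv]
  simp only [hd1]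
  rw [hD2.deriv, hP11]
  push_cast
  field_simp [hℏ0, hm0]
  ring_nf
  simp only [Complex.I_sq]
  field_simp
  ring
end

section
/- For a superposition Ψ = ψ_{m₁} + ψ_{m₂} of states with distinct masses m₁ ≠ m₂, the four-fold Galilean transformation (translation l, boost v, translation −l, boost −v) yields Ψ' = e^{−(i/ℏ)m₁vl}(ψ_{m₁} + e^{−(i/ℏ)Δm·vl}ψ_{m₂}) with Δm = m₂ − m₁, and the relative phase e^{−(i/ℏ)Δm·vl} equals 1 for all v,l if and only if Δm = 0 (taking ℏ = 1). -/
open Complex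

/-- For a superposition of two masses, the four-fold Galilean transformation yields
`Ψ' = e^{-i m₁ v l}(ψ₁ + e^{-i Δm v l} ψ₂)` (taking ℏ = 1), and the relative phase
equals 1 for all `v, l` iff the masses coincide. -/
theorem stmt_3 (m₁ m₂ : ℝ) (ψ₁ ψ₂ : ℝ × ℝ → ℂ) :
    (∀ x t v l : ℝ,
      Complex.exp (-(Complex.I) * m₁ * v * l) * ψ₁ (x, t)
        + Complex.exp (-(Complex.I) * m₂ * v * l) * ψ₂ (x, t)
      = Complex.exp (-(Complex.I) * m₁ * v * l) *
          (ψ₁ (x, t) + Complex.exp (-(Complex.I) * (m₂ - m₁) * v * l) * ψ₂ (x, t)))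
    ∧ ((∀ v l : ℝ, Complex.exp (-(Complex.I) * (m₂ - m₁) * v * l) = 1) ↔ m₁ = m₂) := by
  constructor
  · intro x t v l
    have hc : ((m₂:ℂ) - m₁) ≠ 0 ∨ True := Or.inr trivial
    rw [mul_add, ← mul_assoc, ← Complex.exp_add]
    ring_nf
  · constructor
    · intro h
      by_contra hne
      have hd : (m₂ - m₁ : ℝ) ≠ 0 := sub_ne_zero.mpr (fun e => hne e.symm)
      have := h (1 / (m₂ - m₁)) 1
      rw [Complex.exp_eq_one_iff] at this
      obtain ⟨n, hn⟩ := this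
      have hdC : ((m₂:ℂ) - m₁) ≠ 0 := by
        exact_mod_cast (show ((m₂ - m₁ : ℝ):ℂ) ≠ 0 from Complex.ofReal_ne_zero.mpr hd)
      have heq : -Complex.I * ((m₂:ℂ) - m₁) * ((1 / (m₂ - m₁) : ℝ):ℂ) * ((1:ℝ):ℂ) = -Complex.I := by
        push_cast
        field_simp
      rw [heq] at hn
      have him := congrArg Complex.im hn
      simp [Complex.mul_im, Complex.I_im, Complex.I_re] at him
      rcases eq_or_ne n 0 with rfl|hn0
      · norm_num at him
      · have h1 : (1:ℝ) ≤ |(n:ℝ)| := by exact_mod_cast Int.one_le_abs hn0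
        have habs : (1:ℝ) = |(n:ℝ)| * (2*Real.pi) := by
          have := congrArg (fun r : ℝ => |r|) him
          simpa [abs_mul, abs_of_pos Real.two_pi_pos] using this
        nlinarith [Real.pi_gt_three]
    · intro h v l
      subst h
      simp
end

section
/- Composing the four Lorentz-corrected transformations — space translation by l, Lorentz boost by v, space translation by l/γ, Lorentz boost by −v (with γ = 1/√(1−v²/c²)) — maps (x,t) to (x, t + lv/c²); i.e., the spatial coordinate returns to its original value while time picks up the offset lv/c². -/
/-!
The boost by `-v` is additive, so the translation by `l/γ` can be pulled out of it; it undoes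
the boost by `v` because `γ² (1 - v²/c²) = 1`. What remains is the image of the spatial shift
`(l/γ, 0)` under the boost by `-v`, namely `(l, l v / c²)`: it cancels the first translation and
leaves the time offset.
-/

noncomputable def lorentzBoost (c v γ : ℝ) (p : ℝ × ℝ) : ℝ × ℝ :=
  (γ * (p.1 - v * p.2), γ * (p.2 - v / c ^ 2 * p.1))

lemma lorentzBoost_add (c v γ : ℝ) (p q : ℝ × ℝ) :
    lorentzBoost c v γ (p + q) = lorentzBoost c v γ p + lorentzBoost c v γ q := by
  simp only [lorentzBoost, Prod.fst_add, Prod.snd_add, Prod.mk_add_mk]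
  ext <;> ring

lemma lorentzBoost_neg_lorentzBoost {c v γ : ℝ} (hγ : γ ^ 2 * (1 - v ^ 2 / c ^ 2) = 1)
    (p : ℝ × ℝ) : lorentzBoost c (-v) γ (lorentzBoost c v γ p) = p := by
  simp only [lorentzBoost]
  ext
  · linear_combination p.1 * hγ
  · linear_combination p.2 * hγ

lemma lorentzBoost_neg_inv_mk_zero (c v : ℝ) {γ : ℝ} (hγ : γ ≠ 0) (l : ℝ) :
    lorentzBoost c (-v) γ (l / γ, 0) = (l, l * v / c ^ 2) := by
  simp only [lorentzBoost]
  ext <;> field_simp <;> ring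

lemma lorentzFactor_sq_mul {c v : ℝ} (hc : 0 < c) (hv : |v| < c) :
    (1 / √(1 - v ^ 2 / c ^ 2)) ^ 2 * (1 - v ^ 2 / c ^ 2) = 1 := by
  have hvc : v ^ 2 / c ^ 2 < 1 := by
    rw [div_lt_one (by positivity), ← sq_abs]
    exact pow_lt_pow_left₀ hv (abs_nonneg v) two_ne_zero
  rw [div_pow, one_pow, Real.sq_sqrt (sub_nonneg.mpr hvc.le)]
  exact one_div_mul_cancel (sub_pos.mpr hvc).ne'

/-- Composing translation by `l`, Lorentz boost by `v`, translation by `l/γ`, and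
Lorentz boost by `-v` maps `(x,t)` to `(x, t + l v / c²)`. -/
theorem stmt_4 (c v l : ℝ) (hc : 0 < c) (hv : |v| < c)
    (γ : ℝ) (hγ : γ = 1 / Real.sqrt (1 - v^2 / c^2))
    (T₁ T₂ T₃ T₄ : ℝ × ℝ → ℝ × ℝ)
    (hT₁ : ∀ x t : ℝ, T₁ (x, t) = (x - l, t))
    (hT₂ : ∀ x t : ℝ, T₂ (x, t) = (γ * (x - v * t), γ * (t - (v / c^2) * x)))
    (hT₃ : ∀ x t : ℝ, T₃ (x, t) = (x + l / γ, t))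
    (hT₄ : ∀ x t : ℝ, T₄ (x, t) = (γ * (x + v * t), γ * (t + (v / c^2) * x))) :
    ∀ x t : ℝ, (T₄ ∘ T₃ ∘ T₂ ∘ T₁) (x, t) = (x, t + l * v / c^2) := by
  intro x t
  have hγ_sq : γ ^ 2 * (1 - v ^ 2 / c ^ 2) = 1 := hγ ▸ lorentzFactor_sq_mul hc hv
  have hγ_ne : γ ≠ 0 := by rintro rfl; simp at hγ_sq
  have hT₄_boost : ∀ p, T₄ p = lorentzBoost c (-v) γ p := fun ⟨x, t⟩ => by
    rw [hT₄, lorentzBoost]; ext <;> ring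
  calc (T₄ ∘ T₃ ∘ T₂ ∘ T₁) (x, t)
      = lorentzBoost c (-v) γ (lorentzBoost c v γ (x - l, t) + (l / γ, 0)) := by
        simp [hT₁, hT₂, hT₃, hT₄_boost, lorentzBoost]
    _ = (x - l, t) + (l, l * v / c ^ 2) := by
        rw [lorentzBoost_add, lorentzBoost_neg_lorentzBoost hγ_sq,
          lorentzBoost_neg_inv_mk_zero c v hγ_ne]
    _ = (x, t + l * v / c ^ 2) := by simp
end

section
/- In the limit of small k and m with fixed ratio, the walk dispersion relation ω(k) = arccos(√(1−m²) cos k) approximates the Dirac relation: arccos(√(1−m²)cos k)² − (k² + m²) = o(k² + m²) as (k,m) → (0,0). -/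
/-!
Write `ω = arccos (√(1 - m²) cos k)`. For `cos k ≥ 0` we have `0 ≤ ω ≤ π/2` and
`sin² ω = 1 - (1 - m²) cos² k = sin² k + m² cos² k`, hence
`ω² - k² - m² = (ω² - sin² ω) - (k² - sin² k) - m² sin² k`.
Each term is `O((k² + m²)²)`: `x² - sin² x ≤ x⁴/3` for all `x`, and Jordan's inequality
`ω ≤ (π/2) sin ω` gives `ω² ≤ (π²/4)(k² + m²)`. Dividing by `k² + m²` leaves `O(k² + m²)`.
-/

open Filter Topology Real

lemma Real.sq_sub_sin_sq_le (x : ℝ) : x ^ 2 - sin x ^ 2 ≤ x ^ 4 / 3 := by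
  have hsum : |x + sin x| ≤ 2 * |x| :=
    (abs_add_le _ _).trans (by linarith [abs_sin_le_abs (x := x)])
  calc x ^ 2 - sin x ^ 2 ≤ |x - sin x| * |x + sin x| := by
        rw [← abs_mul]; exact (le_abs_self _).trans_eq' (by ring)
    _ ≤ |x| ^ 3 / 6 * (2 * |x|) :=
        mul_le_mul (abs_sub_sin_le x) hsum (abs_nonneg _) (by positivity)
    _ = x ^ 4 / 3 := by
        rw [show x ^ 4 = |x| ^ 4 by rw [pow_abs, abs_of_nonneg (by positivity)]]; ring

lemma Real.sq_le_sq_pi_div_two_mul_sin_sq {x : ℝ} (hx₀ : 0 ≤ x) (hx : x ≤ π / 2) :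
    x ^ 2 ≤ (π / 2) ^ 2 * sin x ^ 2 := by
  have h := mul_le_sin hx₀ hx
  rw [div_mul_eq_mul_div, div_le_iff₀ pi_pos] at h
  calc x ^ 2 ≤ (π / 2 * sin x) ^ 2 := pow_le_pow_left₀ hx₀ (by linarith) 2
    _ = (π / 2) ^ 2 * sin x ^ 2 := by ring

lemma Real.sin_sq_arccos (x : ℝ) (hx : x ^ 2 ≤ 1) : sin (arccos x) ^ 2 = 1 - x ^ 2 := by
  rw [sin_arccos, sq_sqrt (by linarith)]

lemma abs_arccos_sqrt_mul_cos_sq_sub_le {k m : ℝ} (hk : 0 ≤ cos k) (hm : m ^ 2 ≤ 1) :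
    |arccos (√(1 - m ^ 2) * cos k) ^ 2 - k ^ 2 - m ^ 2| ≤ (π ^ 4 / 16 + 1) * (k ^ 2 + m ^ 2) ^ 2 := by
  set c := √(1 - m ^ 2) * cos k
  set ω := arccos c
  have hsqrt : √(1 - m ^ 2) ^ 2 = 1 - m ^ 2 := sq_sqrt (by linarith)
  have hpyth := sin_sq_add_cos_sq k
  have hsin_ω : sin ω ^ 2 = sin k ^ 2 + m ^ 2 * cos k ^ 2 := by
    rw [sin_sq_arccos c (by rw [mul_pow, hsqrt]; nlinarith [cos_sq_le_one k])]
    rw [mul_pow, hsqrt]; linear_combination -hpyth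
  have hω₀ : 0 ≤ ω := arccos_nonneg c
  have hω : ω ≤ π / 2 := arccos_le_pi_div_two.mpr (mul_nonneg (sqrt_nonneg _) hk)
  have hω_sq : ω ^ 2 ≤ π ^ 2 / 4 * (k ^ 2 + m ^ 2) := by
    have hsin_le : sin ω ^ 2 ≤ k ^ 2 + m ^ 2 := by
      rw [hsin_ω]; nlinarith [sin_sq_le_sq (x := k), cos_sq_le_one k, sq_nonneg m]
    calc ω ^ 2 ≤ (π / 2) ^ 2 * sin ω ^ 2 := sq_le_sq_pi_div_two_mul_sin_sq hω₀ hω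
      _ ≤ (π / 2) ^ 2 * (k ^ 2 + m ^ 2) := by gcongr
      _ = π ^ 2 / 4 * (k ^ 2 + m ^ 2) := by ring
  have hω_pow : ω ^ 4 ≤ π ^ 4 / 16 * (k ^ 2 + m ^ 2) ^ 2 := by
    have := pow_le_pow_left₀ (sq_nonneg ω) hω_sq 2
    rw [← pow_mul] at this; linarith
  have hsplit : ω ^ 2 - k ^ 2 - m ^ 2
      = (ω ^ 2 - sin ω ^ 2) - (k ^ 2 - sin k ^ 2) - m ^ 2 * sin k ^ 2 := by
    rw [hsin_ω]; linear_combination m ^ 2 * hpyth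
  have hA₀ : 0 ≤ ω ^ 2 - sin ω ^ 2 := by linarith [sin_sq_le_sq (x := ω)]
  have hA := sq_sub_sin_sq_le ω
  have hB₀ : 0 ≤ k ^ 2 - sin k ^ 2 := by linarith [sin_sq_le_sq (x := k)]
  have hB := sq_sub_sin_sq_le k
  have hC : m ^ 2 * sin k ^ 2 ≤ m ^ 2 * k ^ 2 :=
    mul_le_mul_of_nonneg_left sin_sq_le_sq (sq_nonneg m)
  rw [hsplit, abs_le]
  constructor <;> nlinarith

/-- In the limit of small `k` and `m`, the walk dispersion
`ω = arccos(√(1−m²) cos k)` recovers the Dirac relation: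
`ω² = k² + m² + o(k² + m²)` as `(k,m) → (0,0)`. -/
theorem stmt_14 :
    Tendsto
      (fun p : ℝ × ℝ =>
        ((Real.arccos (Real.sqrt (1 - p.2^2) * Real.cos p.1))^2 - p.1^2 - p.2^2)
          / (p.1^2 + p.2^2))
      (nhdsWithin (0, 0) {p : ℝ × ℝ | p ≠ (0, 0)})
      (nhds 0) := by
  set C := π ^ 4 / 16 + 1
  have hcos : ∀ᶠ p : ℝ × ℝ in 𝓝 (0, 0), 0 < cos p.1 :=
    ((continuous_cos.comp continuous_fst).tendsto (0, 0)).eventually_const_lt (by simp)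
  have hmass : ∀ᶠ p : ℝ × ℝ in 𝓝 (0, 0), p.2 ^ 2 < 1 :=
    ((continuous_snd.pow 2).tendsto (0, 0)).eventually_lt_const (by simp)
  have hbound : Tendsto (fun p : ℝ × ℝ => C * (p.1 ^ 2 + p.2 ^ 2))
      (𝓝[{p | p ≠ (0, 0)}] (0, 0)) (𝓝 0) := by
    simpa using ((by fun_prop : Continuous fun p : ℝ × ℝ => C * (p.1 ^ 2 + p.2 ^ 2)).tendsto
      (0, 0)).mono_left nhdsWithin_le_nhds
  refine squeeze_zero_norm' ?_ hbound
  filter_upwards [nhdsWithin_le_nhds (hcos.and hmass), self_mem_nhdsWithin]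
    with p ⟨hk, hm⟩ hp
  have hpos : 0 < p.1 ^ 2 + p.2 ^ 2 := by
    have hp' : p.1 ≠ 0 ∨ p.2 ≠ 0 := by
      rw [or_iff_not_imp_left, not_not]; simpa [Prod.ext_iff] using hp
    rcases hp' with h | h <;> positivity
  rw [norm_div, Real.norm_eq_abs, Real.norm_of_nonneg hpos.le, div_le_iff₀ hpos]
  calc _ ≤ C * (p.1 ^ 2 + p.2 ^ 2) ^ 2 := abs_arccos_sqrt_mul_cos_sq_sub_le hk.le hm.le
    _ = _ := by ring
end
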